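/- arXiv:1801.03908 — 7 statements merged into one kernel-verified Lean document; each statement's English description precedes it below -/
import Mathlib

section
/- A group G admits a homogeneous length function if and only if G is abelian and torsion-free. -/
/-!
A homogeneous length is conjugation invariant, as `n ℓ(g w g⁻¹) = ℓ(g wⁿ g⁻¹) ≤ n ℓ(w) + 2 ℓ(g)`.
Hence `ℓ(w²) = 2 ℓ(w)` makes `j ↦ ℓ(g yʲ C)` midpoint convex, and replacing `yˢ` by `x yˢ x⁻¹`
in a word costs at most `2 ℓ(x)`. Unfolding `[x, y]ⁿ` one commutator at a time and applying a
gambler's-ruin estimate to the exponent of `y`, the cost `2 ℓ(x)` is paid only once every `M`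
steps, which gives `ℓ([x, y]^(k⁴)) = O(k³)`; by homogeneity `ℓ([x, y]) = 0`, so a length
function forces `[x, y] = 1`. Conversely, a torsion-free abelian group embeds into its divisible
hull, a `ℚ`-vector space, and the `ℓ¹`-norm of coordinates in a basis is a homogeneous length.
-/

open scoped commutatorElement

theorem nonpos_of_forall_nat_mul_le {a c : ℝ} (h : ∀ n : ℕ, n * a ≤ c) : a ≤ 0 := by
  by_contra! ha
  obtain ⟨n, hn⟩ := exists_nat_gt (c / a)
  rw [div_lt_iff₀ ha] at hn
  linarith [h n]

theorem nat_mul_le_of_two_mul_le_add (h : ℤ → ℝ) (hconv : ∀ j, 2 * h j ≤ h (j + 1) + h (j - 1))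
    (M : ℕ) : M * h 1 ≤ (M - 1) * h 0 + h M := by
  have key : ∀ k : ℕ, h 1 - h 0 ≤ h (k + 1) - h k ∧ h 0 + k * (h 1 - h 0) ≤ h k := by
    intro k
    induction k with
    | zero => simp
    | succ k ih =>
      have := hconv (k + 1)
      push_cast
      simp only [add_sub_cancel_right] at this
      constructor <;> linarith
  linarith [(key M).2]

theorem Real.sub_one_mul_sqrt_add_sqrt_le {M : ℝ} (hM : 1 ≤ M) (z m : ℝ) (hm : 0 ≤ m) :
    (M - 1) * √((z + 1) ^ 2 + 2 * M * m) + √((z + 1 - M) ^ 2 + 2 * M * m) ≤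
      M * √(z ^ 2 + 2 * M * (m + 1)) := by
  set a := √((z + 1) ^ 2 + 2 * M * m)
  set b := √((z + 1 - M) ^ 2 + 2 * M * m)
  have ha : a ^ 2 = (z + 1) ^ 2 + 2 * M * m := Real.sq_sqrt (by positivity)
  have hb : b ^ 2 = (z + 1 - M) ^ 2 + 2 * M * m := Real.sq_sqrt (by positivity)
  have hc : √(z ^ 2 + 2 * M * (m + 1)) ^ 2 = z ^ 2 + 2 * M * (m + 1) :=
    Real.sq_sqrt (by positivity)
  have : 0 ≤ a := Real.sqrt_nonneg _
  have : 0 ≤ b := Real.sqrt_nonneg _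
  refine (pow_le_pow_iff_left₀ (by positivity) (by positivity) two_ne_zero).1 ?_
  calc ((M - 1) * a + b) ^ 2 ≤ M * ((M - 1) * a ^ 2 + b ^ 2) := by
        nlinarith [mul_nonneg (sub_nonneg.2 hM) (sq_nonneg (a - b))]
    _ = M ^ 2 * (z ^ 2 + M - 1 + 2 * M * m) := by rw [ha, hb]; ring
    _ ≤ M ^ 2 * (z ^ 2 + 2 * M * (m + 1)) :=
        mul_le_mul_of_nonneg_left (by nlinarith) (sq_nonneg M)
    _ = (M * √(z ^ 2 + 2 * M * (m + 1))) ^ 2 := by rw [mul_pow, hc]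

namespace GroupSeminorm

variable {G : Type*} [Group G] {p : GroupSeminorm G} {x y g : G} {A z : ℝ}

-- `g` behaves like position `z` of a walk on `ℤ` in which `x yˢ x⁻¹` is a free step of size `s`.
def ConjBound (p : GroupSeminorm G) (x y g : G) (A z : ℝ) : Prop :=
  ∀ s t : ℤ, p (g * (x * y ^ s * x⁻¹) * y ^ t) ≤ A + |z + s + t| * p y

theorem ConjBound.mul_conj (h : ConjBound p x y g A z) (K : ℤ) :
    ConjBound p x y (g * (x * y ^ K * x⁻¹)) A (z + K) := fun s t => by
  have := h (K + s) t
  push_cast at this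
  convert this using 3
  · rw [zpow_add]; group
  · congr 1; ring

section Homogeneous

variable (hp : ∀ (x : G) (n : ℕ), p (x ^ n) = n * p x)
include hp

theorem map_zpow_of_homogeneous (x : G) (n : ℤ) : p (x ^ n) = |(n : ℝ)| * p x := by
  obtain ⟨k, rfl | rfl⟩ := Int.eq_nat_or_neg n <;> simp [map_inv_eq_map, hp]

theorem map_conj (g w : G) : p (g * w * g⁻¹) = p w := by
  have map_conj_le : ∀ g w : G, p (g * w * g⁻¹) ≤ p w := fun g w => by
    refine sub_nonpos.1 (nonpos_of_forall_nat_mul_le (c := 2 * p g) fun n => ?_)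
    have h₁ := map_mul_le_add p (g * w ^ n) g⁻¹
    have h₂ := map_mul_le_add p g (w ^ n)
    rw [← conj_pow, hp, map_inv_eq_map] at h₁
    rw [hp] at h₂
    linarith
  refine (map_conj_le g w).antisymm ?_
  simpa [mul_assoc] using map_conj_le g⁻¹ (g * w * g⁻¹)

theorem map_mul_comm (u v : G) : p (u * v) = p (v * u) := by
  simpa [mul_assoc] using map_conj hp u (v * u)

theorem map_mul_mul_le (a b c : G) : p (a * b * c) ≤ p (a * c) + p b := by
  rw [map_mul_comm hp, ← mul_assoc, ← map_mul_comm hp c a]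
  exact map_mul_le_add p _ _

theorem map_commutatorElement_le (x z : G) : p ⁅x, z⁆ ≤ 2 * p x := by
  have := map_mul_le_add p x (z * x⁻¹ * z⁻¹)
  rw [map_conj hp, map_inv_eq_map] at this
  simpa [commutatorElement_def, mul_assoc, two_mul] using this

theorem map_mul_conj_mul_le (g x y : G) (s t : ℤ) :
    p (g * (x * y ^ s * x⁻¹) * y ^ t) ≤ p (g * y ^ (s + t)) + 2 * p x := by
  have hword : g * (x * y ^ s * x⁻¹) * y ^ t = g * ⁅x, y ^ s⁆ * y ^ (s + t) := by
    rw [commutatorElement_def, zpow_add]; group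
  rw [hword]
  linarith [map_mul_mul_le hp g ⁅x, y ^ s⁆ (y ^ (s + t)), map_commutatorElement_le hp x (y ^ s)]

theorem two_mul_le_map_mul_add_map_mul_inv (w u : G) : 2 * p w ≤ p (w * u) + p (w * u⁻¹) := by
  have := map_mul_le_add p (w * u) (u⁻¹ * w)
  rwa [show w * u * (u⁻¹ * w) = w ^ 2 by rw [sq]; group, hp, map_mul_comm hp u⁻¹] at this

theorem nat_mul_map_mul_inv_mul_le (g y C : G) (M : ℕ) :
    M * p (g * y⁻¹ * C) ≤ (M - 1) * p (g * C) + p (g * y ^ (-(M : ℤ)) * C) := by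
  have := nat_mul_le_of_two_mul_le_add (fun j => p (g * y ^ (-j) * C)) (fun j => by
    have := two_mul_le_map_mul_add_map_mul_inv hp (g * y ^ (-j) * C) (C⁻¹ * y⁻¹ * C)
    convert this using 3 <;> group) M
  simpa using this


theorem conjBound_of_map_mul_zpow_le (h : ∀ n : ℤ, p (g * y ^ n) ≤ A + |z + n| * p y) :
    ConjBound p x y g (A + 2 * p x) z := fun s t => by
  have := h (s + t)
  push_cast at this
  rw [← add_assoc] at this
  linarith [map_mul_conj_mul_le hp g x y s t]

theorem conjBound_one : ConjBound p x y 1 (2 * p x) 0 := by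
  simpa using conjBound_of_map_mul_zpow_le hp (A := 0) (z := 0) fun n => by
    simp [map_zpow_of_homogeneous hp]

theorem ConjBound.mul_zpow (h : ConjBound p x y g A z) (n : ℤ) :
    ConjBound p x y (g * y ^ n) (A + 2 * p x) (z + n) :=
  conjBound_of_map_mul_zpow_le hp fun k => by
    simpa [mul_assoc, ← zpow_add, add_assoc] using h 0 (n + k)

theorem ConjBound.map_mul_inv_mul_commutatorElement_pow_le {M : ℕ} (hM : 1 ≤ M) (m : ℕ) :
    ∀ {g : G} {A z : ℝ}, ConjBound p x y g A z →
      p (g * y⁻¹ * ⁅x, y⁆ ^ m) ≤ A + 2 * p x * m / M + p y * (√(z ^ 2 + 2 * M * m) + 1) := by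
  induction m with
  | zero =>
    intro g A z h
    have hstep := h 0 (-1)
    simp only [zpow_zero, mul_one, mul_inv_cancel, zpow_neg_one, Int.cast_zero, add_zero,
      Int.cast_neg, Int.cast_one, ← sub_eq_add_neg] at hstep
    simp only [pow_zero, mul_one, CharP.cast_eq_zero, mul_zero, zero_div, add_zero,
      Real.sqrt_sq_eq_abs]
    have := mul_le_mul_of_nonneg_right (abs_sub z 1) (apply_nonneg p y)
    rw [abs_one] at this
    linarith
  | succ m ih =>
    intro g A z h
    have hword (g' : G) :
        g' * (x * y ^ (1 : ℤ) * x⁻¹) * y⁻¹ * ⁅x, y⁆ ^ m = g' * ⁅x, y⁆ ^ (m + 1) := by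
      simp only [pow_succ', commutatorElement_def, zpow_one, mul_assoc]
    have h₀ := ih (h.mul_conj 1)
    have h_M := ih ((h.mul_zpow hp (-M)).mul_conj 1)
    rw [hword] at h₀ h_M
    -- Convexity in the exponent of `y` between `y⁰` and `y⁻ᴹ`; only the far end pays `2 p x`.
    have hwalk := nat_mul_map_mul_inv_mul_le hp g y (⁅x, y⁆ ^ (m + 1)) M
    have hM' : (1 : ℝ) ≤ M := by exact_mod_cast hM
    have hMpos : (0 : ℝ) < M := by positivity
    have hsqrt := Real.sub_one_mul_sqrt_add_sqrt_le hM' z m m.cast_nonneg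
    push_cast at h₀ h_M ⊢
    rw [show z + -(M : ℝ) + 1 = z + 1 - M by ring] at h_M
    have h₀' := mul_le_mul_of_nonneg_left h₀ (sub_nonneg.2 hM')
    have hsqrt' := mul_le_mul_of_nonneg_left hsqrt (apply_nonneg p y)
    have hdiv (k : ℝ) : M * (2 * p x * k / M) = 2 * p x * k := mul_div_cancel₀ _ hMpos.ne'
    refine le_of_mul_le_mul_left ?_ hMpos
    linarith [hdiv m, hdiv (m + 1)]

theorem map_commutatorElement_eq_zero (x y : G) : p ⁅x, y⁆ = 0 := by
  refine le_antisymm (nonpos_of_forall_nat_mul_le (c := 4 * p x + 3 * p y) fun k => ?_)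
    (apply_nonneg p _)
  have hx := apply_nonneg p x
  have hy := apply_nonneg p y
  have hc := apply_nonneg p ⁅x, y⁆
  rcases Nat.eq_zero_or_pos k with rfl | hk
  · simp only [CharP.cast_eq_zero, zero_mul]
    positivity
  have hk1 : (1 : ℝ) ≤ k := by exact_mod_cast hk
  -- With `M = k²` and `k⁴` steps every term of the bound is `O(k³)`.
  have h := ((conjBound_one hp (x := x) (y := y)).mul_conj 1
    ).map_mul_inv_mul_commutatorElement_pow_le hp (M := k ^ 2) (Nat.one_le_pow _ _ hk) (k ^ 4)
  rw [show (1 : G) * (x * y ^ (1 : ℤ) * x⁻¹) * y⁻¹ * ⁅x, y⁆ ^ (k ^ 4) = ⁅x, y⁆ ^ (k ^ 4 + 1) by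
    simp [pow_succ', commutatorElement_def, mul_assoc], hp] at h
  push_cast at h
  have hsqrt : √((0 + 1) ^ 2 + 2 * (k : ℝ) ^ 2 * k ^ 4) ≤ 2 * k ^ 3 :=
    (Real.sqrt_le_left (by positivity)).2 (by nlinarith [pow_le_pow_left₀ zero_le_one hk1 6])
  have hdiv : 2 * p x * (k : ℝ) ^ 4 / k ^ 2 = 2 * p x * k ^ 2 := by field_simp
  have hk2 : (k : ℝ) ^ 2 ≤ k ^ 3 := pow_le_pow_right₀ hk1 (by norm_num)
  have hk3 : (1 : ℝ) ≤ k ^ 3 := one_le_pow₀ hk1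
  rw [hdiv] at h
  have : (k : ℝ) ^ 3 * (k * p ⁅x, y⁆) ≤ k ^ 3 * (4 * p x + 3 * p y) := by
    linarith [mul_le_mul_of_nonneg_left hk2 hx, mul_le_mul_of_nonneg_left hk3 hx,
      mul_le_mul_of_nonneg_left hk3 hy, mul_le_mul_of_nonneg_left hsqrt hy]
  exact le_of_mul_le_mul_left this (by positivity)

end Homogeneous

end GroupSeminorm

namespace Finsupp

variable {ι : Type*}

noncomputable def l1AddGroupNorm : AddGroupNorm (ι →₀ ℚ) where
  toFun f := f.sum fun _ q => |(q : ℝ)|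
  map_zero' := by simp
  add_le' f g := by
    classical
    rw [sum_of_support_subset (f + g) support_add _ (by simp),
      sum_of_support_subset f Finset.subset_union_left _ (by simp),
      sum_of_support_subset g Finset.subset_union_right _ (by simp), ← Finset.sum_add_distrib]
    refine Finset.sum_le_sum fun i _ => ?_
    push_cast [add_apply]
    exact abs_add_le _ _
  neg' f := by simp [Finsupp.sum, support_neg]
  eq_zero_of_map_eq_zero' f hf := by
    by_contra hne
    obtain ⟨i, hi⟩ := support_nonempty_iff.2 hne
    refine (Finset.sum_pos' (fun j _ => abs_nonneg _) ⟨i, hi, ?_⟩).ne' hf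
    simpa using mem_support_iff.1 hi

theorem l1AddGroupNorm_zsmul (n : ℤ) (f : ι →₀ ℚ) :
    l1AddGroupNorm (n • f) = |(n : ℝ)| * l1AddGroupNorm f := by
  rcases eq_or_ne n 0 with rfl | hn
  · simp
  change (n • f).sum (fun _ q => |(q : ℝ)|) = |(n : ℝ)| * f.sum (fun _ q => |(q : ℝ)|)
  simp [Finsupp.sum, support_smul_eq hn, Finset.mul_sum, abs_mul]

end Finsupp

theorem exists_homogeneous_groupNorm {G : Type*} [CommGroup G] [IsMulTorsionFree G] :
    ∃ p : GroupNorm G, ∀ (x : G) (n : ℤ), p (x ^ n) = |(n : ℝ)| * p x := by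
  let V := DivisibleHull (Additive G)
  let φ : Additive G →+ (Module.Basis.ofVectorSpaceIndex ℚ V →₀ ℚ) :=
    (Module.Basis.ofVectorSpace ℚ V).repr.toLinearMap.toAddMonoidHom.comp
      (DivisibleHull.coeAddMonoidHom _)
  have hφ : Function.Injective φ :=
    (Module.Basis.ofVectorSpace ℚ V).repr.injective.comp DivisibleHull.coe_injective
  refine ⟨{ toFun x := Finsupp.l1AddGroupNorm (φ (.ofMul x))
            map_one' := by simp
            mul_le' x y := by simpa using map_add_le_add _ _ _
            inv' x := by simp
            eq_one_of_map_eq_zero' x hx := by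
              simpa using (injective_iff_map_eq_zero φ).1 hφ _
                ((map_eq_zero_iff_eq_zero _).1 hx) }, ?_⟩
  intro x n
  show Finsupp.l1AddGroupNorm (φ (n • .ofMul x)) = _
  rw [map_zsmul, Finsupp.l1AddGroupNorm_zsmul]
  rfl

/-- A group admits a homogeneous length function if and only if it is abelian and
torsion-free. -/
theorem exists_homogeneous_length_function_iff {G : Type*} [Group G] :
    (∃ ℓ : G → ℝ,
      (∀ x : G, 0 ≤ ℓ x) ∧
      ℓ 1 = 0 ∧
      (∀ x : G, ℓ x⁻¹ = ℓ x) ∧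
      (∀ x y : G, ℓ (x * y) ≤ ℓ x + ℓ y) ∧
      (∀ (x : G) (n : ℤ), ℓ (x ^ n) = |(n : ℝ)| * ℓ x) ∧
      (∀ x : G, x ≠ 1 → 0 < ℓ x)) ↔
    ((∀ x y : G, x * y = y * x) ∧ (∀ (x : G) (n : ℤ), 1 ≤ n → x ^ n = 1 → x = 1)) := by
  constructor
  · rintro ⟨ℓ, -, h1, hi, hs, hh, hpos⟩
    let p : GroupSeminorm G := ⟨ℓ, h1, hs, hi⟩
    have hp (x : G) (n : ℕ) : ℓ (x ^ n) = n * ℓ x := by simpa using hh x n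
    refine ⟨fun x y => ?_, fun x n hn hxn => ?_⟩
    · by_contra hne
      exact (hpos _ (mt commutatorElement_eq_one_iff_mul_comm.1 hne)).ne'
        (GroupSeminorm.map_commutatorElement_eq_zero (p := p) hp x y)
    · by_contra hx
      have hn' : (0 : ℝ) < |(n : ℝ)| := abs_pos.2 (by exact_mod_cast (by omega : n ≠ 0))
      have := hh x n
      rw [hxn, h1] at this
      exact (mul_pos hn' (hpos x hx)).ne this
  · rintro ⟨hcomm, htf⟩
    let : CommGroup G := { ‹Group G› with mul_comm := hcomm }
    have : IsMulTorsionFree G := IsMulTorsionFree.of_not_isOfFinOrder fun a ha hfin => by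
      obtain ⟨n, hn, han⟩ := isOfFinOrder_iff_pow_eq_one.1 hfin
      exact ha (htf a n (by omega) (by simpa using han))
    obtain ⟨p, hp⟩ := exists_homogeneous_groupNorm (G := G)
    exact ⟨p, apply_nonneg p, map_one_eq_zero p, map_inv_eq_map p, map_mul_le_add p, hp,
      fun x hx => map_pos_of_ne_one p hx⟩
end

section
/- Let G be a group, c, k ∈ ℝ, and ‖·‖ : G → ℝ a function satisfying ‖xy‖ ≤ ‖x‖ + ‖y‖ + k for all x,y ∈ G and ‖x²‖ ≥ 2‖x‖ − c for all x ∈ G. Then for all x, y ∈ G one has ‖[x,y]‖ ≤ 5c + 4k. -/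
/-!
Iterating `ℓ (x ^ 2) ≥ 2 ℓ x - c` shows that `ℓ` is, up to `c`, bounded by its growth rate along
the powers `a ^ 2 ^ n`: if `ℓ (a ^ 2 ^ n) ≤ 2 ^ n A + B` for all `n`, then `ℓ a ≤ A + c`.
This makes `ℓ` conjugation invariant up to `c + k`. Writing `W = [x, Y]`, the identity
`[x, Y²] = W · Y W Y⁻¹` telescopes to an estimate `ℓ (W ^ 2j) ≤ j (ℓ [x, Y²] + c + 2k) + O(1)`,
whence `2 ℓ [x, Y] ≤ ℓ [x, Y²] + 3c + 2k`. Along `Y = y ^ 2 ^ s` the commutators stay bounded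
(by conjugation invariance), and a sequence with `2 vₛ ≤ vₛ₊₁` that is bounded above has
`v₀ ≤ 0`; this gives `ℓ [x, y] ≤ 3c + 2k ≤ 5c + 4k`.
-/

lemma le_of_forall_two_pow_mul_le {a A B : ℝ} (h : ∀ n : ℕ, 2 ^ n * a ≤ 2 ^ n * A + B) :
    a ≤ A := by
  by_contra! hlt
  obtain ⟨n, hn⟩ := pow_unbounded_of_one_lt (B / (a - A)) one_lt_two
  rw [div_lt_iff₀ (sub_pos.mpr hlt)] at hn
  linarith [h n]

lemma nonpos_of_two_mul_le_succ {v : ℕ → ℝ} {M : ℝ} (h : ∀ s, 2 * v s ≤ v (s + 1))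
    (hM : ∀ s, v s ≤ M) : v 0 ≤ 0 := by
  have hpow : ∀ s, 2 ^ s * v 0 ≤ v s := by
    intro s
    induction s with
    | zero => simp
    | succ s ih => rw [pow_succ]; linarith [h s]
  exact le_of_forall_two_pow_mul_le (B := M) fun s => by linarith [hpow s, hM s]

open scoped commutatorElement

namespace QuasiLength

variable {G : Type*} [Group G] {c k : ℝ} {ℓ : G → ℝ}

lemma map_one_le (hsq : ∀ x : G, 2 * ℓ x - c ≤ ℓ (x ^ 2)) : ℓ (1 : G) ≤ c := by
  linarith [one_pow (M := G) 2 ▸ hsq 1]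

lemma pow_two_pow_le (htri : ∀ x y : G, ℓ (x * y) ≤ ℓ x + ℓ y + k) (a : G) (n : ℕ) :
    ℓ (a ^ 2 ^ n) ≤ 2 ^ n * ℓ a + (2 ^ n - 1) * k := by
  induction n with
  | zero => simp
  | succ n ih =>
    have hsplit : a ^ 2 ^ (n + 1) = a ^ 2 ^ n * a ^ 2 ^ n := by rw [pow_succ, pow_mul, sq]
    rw [hsplit, pow_succ]
    linarith [htri (a ^ 2 ^ n) (a ^ 2 ^ n)]

lemma two_pow_mul_le_pow_two_pow (hsq : ∀ x : G, 2 * ℓ x - c ≤ ℓ (x ^ 2)) (a : G) (n : ℕ) :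
    2 ^ n * ℓ a ≤ ℓ (a ^ 2 ^ n) + (2 ^ n - 1) * c := by
  induction n with
  | zero => simp
  | succ n ih =>
    rw [pow_succ, pow_succ, pow_mul]
    linarith [hsq (a ^ 2 ^ n)]

lemma le_add_of_forall_pow_two_pow_le (hsq : ∀ x : G, 2 * ℓ x - c ≤ ℓ (x ^ 2)) {a : G}
    {A B : ℝ} (h : ∀ n : ℕ, ℓ (a ^ 2 ^ n) ≤ 2 ^ n * A + B) : ℓ a ≤ A + c :=
  le_of_forall_two_pow_mul_le (B := B - c) fun n => by
    linarith [two_pow_mul_le_pow_two_pow hsq a n, h n]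

lemma conj_le (htri : ∀ x y : G, ℓ (x * y) ≤ ℓ x + ℓ y + k)
    (hsq : ∀ x : G, 2 * ℓ x - c ≤ ℓ (x ^ 2)) (g t : G) :
    ℓ (g * t * g⁻¹) ≤ ℓ t + c + k := by
  have h := le_add_of_forall_pow_two_pow_le hsq (a := g * t * g⁻¹) (A := ℓ t + k)
    (B := ℓ g + ℓ g⁻¹ + k) fun n => by
      rw [conj_pow]
      linarith [htri (g * t ^ 2 ^ n) g⁻¹, htri g (t ^ 2 ^ n), pow_two_pow_le htri t n]
  linarith

/-- Each factor `W ^ j V W ^ (-j)` of the telescoping product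
`W ^ j Y W ^ j Y⁻¹ = ∏ (W ^ i V W ^ (-i))`, where `V = W · Y W Y⁻¹`, costs `ℓ V + c + 2k`. -/
lemma pow_mul_conj_pow_le (htri : ∀ x y : G, ℓ (x * y) ≤ ℓ x + ℓ y + k)
    (hsq : ∀ x : G, 2 * ℓ x - c ≤ ℓ (x ^ 2)) (W Y : G) (j : ℕ) :
    ℓ (W ^ j * Y * W ^ j * Y⁻¹) ≤ j * (ℓ (W * (Y * W * Y⁻¹)) + c + 2 * k) + c := by
  induction j with
  | zero => simpa using map_one_le hsq
  | succ j ih =>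
    have hsplit : W ^ (j + 1) * Y * W ^ (j + 1) * Y⁻¹ =
        (W ^ j * (W * (Y * W * Y⁻¹)) * (W ^ j)⁻¹) * (W ^ j * Y * W ^ j * Y⁻¹) := by
      rw [pow_succ]; group
    rw [hsplit]
    push_cast
    linarith [htri (W ^ j * (W * (Y * W * Y⁻¹)) * (W ^ j)⁻¹) (W ^ j * Y * W ^ j * Y⁻¹),
      conj_le htri hsq (W ^ j) (W * (Y * W * Y⁻¹))]

lemma pow_two_mul_le (htri : ∀ x y : G, ℓ (x * y) ≤ ℓ x + ℓ y + k)
    (hsq : ∀ x : G, 2 * ℓ x - c ≤ ℓ (x ^ 2)) (W Y : G) (j : ℕ) :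
    ℓ (W ^ (2 * j)) ≤ j * (ℓ (W * (Y * W * Y⁻¹)) + c + 2 * k) + (ℓ Y + ℓ Y⁻¹ + 2 * c + 3 * k) := by
  have hsplit : W ^ (2 * j) =
      (W ^ j * Y * W ^ j * Y⁻¹) * (Y * ((W ^ j)⁻¹ * Y⁻¹ * ((W ^ j)⁻¹)⁻¹)) := by
    rw [two_mul, pow_add]; group
  rw [hsplit]
  linarith [htri (W ^ j * Y * W ^ j * Y⁻¹) (Y * ((W ^ j)⁻¹ * Y⁻¹ * ((W ^ j)⁻¹)⁻¹)),
    htri Y ((W ^ j)⁻¹ * Y⁻¹ * ((W ^ j)⁻¹)⁻¹), conj_le htri hsq (W ^ j)⁻¹ Y⁻¹,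
    pow_mul_conj_pow_le htri hsq W Y j]

lemma two_mul_le_mul_conj (htri : ∀ x y : G, ℓ (x * y) ≤ ℓ x + ℓ y + k)
    (hsq : ∀ x : G, 2 * ℓ x - c ≤ ℓ (x ^ 2)) (W Y : G) :
    2 * ℓ W ≤ ℓ (W * (Y * W * Y⁻¹)) + 3 * c + 2 * k := by
  have hsq_le := le_add_of_forall_pow_two_pow_le hsq (a := W ^ 2)
    (B := ℓ Y + ℓ Y⁻¹ + 2 * c + 3 * k) fun n => by
      rw [← pow_mul]
      exact_mod_cast pow_two_mul_le htri hsq W Y (2 ^ n)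
  linarith [hsq W]

lemma commutatorElement_le (htri : ∀ x y : G, ℓ (x * y) ≤ ℓ x + ℓ y + k)
    (hsq : ∀ x : G, 2 * ℓ x - c ≤ ℓ (x ^ 2)) (x y : G) : ℓ ⁅x, y⁆ ≤ 3 * c + 2 * k := by
  have hsucc : ∀ Y : G, ⁅x, Y ^ 2⁆ = ⁅x, Y⁆ * (Y * ⁅x, Y⁆ * Y⁻¹) := fun Y => by
    rw [sq]; simp only [commutatorElement_def]; group
  have hbdd : ∀ Y : G, ℓ ⁅x, Y⁆ ≤ ℓ x + ℓ x⁻¹ + c + 2 * k := fun Y => by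
    rw [commutatorElement_def, mul_assoc, mul_assoc, ← mul_assoc Y]
    linarith [htri x (Y * x⁻¹ * Y⁻¹), conj_le htri hsq Y x⁻¹]
  have := nonpos_of_two_mul_le_succ (v := fun s => ℓ ⁅x, y ^ 2 ^ s⁆ - (3 * c + 2 * k))
    (M := ℓ x + ℓ x⁻¹ - 2 * c) (fun s => by
      rw [pow_succ, pow_mul, hsucc]
      linarith [two_mul_le_mul_conj htri hsq ⁅x, y ^ 2 ^ s⁆ (y ^ 2 ^ s)])
    (fun s => by linarith [hbdd (y ^ 2 ^ s)])
  simpa using this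

end QuasiLength

/-- Quasified version: if `ℓ (x y) ≤ ℓ x + ℓ y + k` and `ℓ (x^2) ≥ 2 ℓ x - c`, then
`ℓ [x,y] ≤ 5c + 4k`. -/
theorem commutator_bound_quasi {G : Type*} [Group G] (c k : ℝ) (ℓ : G → ℝ)
    (htri : ∀ x y : G, ℓ (x * y) ≤ ℓ x + ℓ y + k)
    (hsq : ∀ x : G, 2 * ℓ x - c ≤ ℓ (x ^ 2)) :
    ∀ x y : G, ℓ (x * y * x⁻¹ * y⁻¹) ≤ 5 * c + 4 * k := by
  intro x y
  have hck : 0 ≤ c + k := by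
    linarith [QuasiLength.map_one_le hsq, mul_one (1 : G) ▸ htri 1 1]
  linarith [commutatorElement_def x y ▸ QuasiLength.commutatorElement_le htri hsq x y]
end

section
/- Let G be a group, c ∈ ℝ, and ‖·‖ : G → ℝ a function satisfying hypotheses (i) and (ii) with constant c. Then for all x, y ∈ G one has ‖yxy⁻¹‖ ≤ ‖x‖ + c (approximate conjugation invariance). -/
/-!
Replacing `x` by `x ^ 2 ^ k` homogenizes the problem: iterating (ii) gives
`ℓ (z ^ 2 ^ k) ≥ 2 ^ k (ℓ z - c) + c`, while (i) gives `ℓ (x ^ 2 ^ k) ≤ 2 ^ k ℓ x`.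
Applied to `z = y x y⁻¹`, whose powers are `y x ^ 2 ^ k y⁻¹`, this shows that
`2 ^ k (ℓ (y x y⁻¹) - ℓ x - c)` is bounded by `ℓ y + ℓ y⁻¹ - c` for every `k`.
-/

section PowTwoPow

variable {M : Type*} [Monoid M] {ℓ : M → ℝ}

theorem pow_two_pow_le_of_subadditive (htri : ∀ x y : M, ℓ (x * y) ≤ ℓ x + ℓ y)
    (k : ℕ) (x : M) : ℓ (x ^ 2 ^ k) ≤ 2 ^ k * ℓ x := by
  induction k with
  | zero => simp
  | succ k ih =>
    calc ℓ (x ^ 2 ^ (k + 1)) = ℓ (x ^ 2 ^ k * x ^ 2 ^ k) := by rw [pow_succ, pow_mul, sq]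
      _ ≤ ℓ (x ^ 2 ^ k) + ℓ (x ^ 2 ^ k) := htri _ _
      _ ≤ 2 ^ (k + 1) * ℓ x := by rw [pow_succ]; linarith

theorem le_pow_two_pow_of_le_sq {c : ℝ} (hsq : ∀ x : M, 2 * ℓ x - c ≤ ℓ (x ^ 2))
    (k : ℕ) (x : M) : 2 ^ k * (ℓ x - c) + c ≤ ℓ (x ^ 2 ^ k) := by
  induction k with
  | zero => simp
  | succ k ih =>
    calc 2 ^ (k + 1) * (ℓ x - c) + c = 2 * (2 ^ k * (ℓ x - c) + c) - c := by ring
      _ ≤ 2 * ℓ (x ^ 2 ^ k) - c := by linarith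
      _ ≤ ℓ (x ^ 2 ^ (k + 1)) := by rw [pow_succ, pow_mul]; exact hsq _

end PowTwoPow

theorem nonpos_of_forall_two_pow_mul_le {a B : ℝ} (h : ∀ k : ℕ, 2 ^ k * a ≤ B) : a ≤ 0 := by
  by_contra! ha
  obtain ⟨k, hk⟩ := pow_unbounded_of_one_lt (B / a) one_lt_two
  rw [div_lt_iff₀ ha] at hk
  linarith [h k]

/-- Approximate conjugation invariance: under the triangle inequality and
`ℓ (x^2) ≥ 2 ℓ x - c`, one has `ℓ (y x y⁻¹) ≤ ℓ x + c`. -/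
theorem approximate_conjugation_invariance {G : Type*} [Group G] (c : ℝ) (ℓ : G → ℝ)
    (htri : ∀ x y : G, ℓ (x * y) ≤ ℓ x + ℓ y)
    (hsq : ∀ x : G, 2 * ℓ x - c ≤ ℓ (x ^ 2)) :
    ∀ x y : G, ℓ (y * x * y⁻¹) ≤ ℓ x + c := by
  intro x y
  suffices ℓ (y * x * y⁻¹) - ℓ x - c ≤ 0 by linarith
  refine nonpos_of_forall_two_pow_mul_le (B := ℓ y + ℓ y⁻¹ - c) fun k => ?_
  have lower := le_pow_two_pow_of_le_sq hsq k (y * x * y⁻¹)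
  have upper := pow_two_pow_le_of_subadditive htri k x
  rw [conj_pow] at lower
  linarith [htri (y * x ^ 2 ^ k) y⁻¹, htri y (x ^ 2 ^ k)]
end

section
/- Let ‖·‖ be a homogeneous pseudo-length function on a group G. Then ‖·‖ is conjugation invariant: ‖yxy⁻¹‖ = ‖x‖ for all x, y ∈ G. -/
/-!
Conjugating by `y` costs at most `2 ℓ y`, independently of the element conjugated. Applied to
`xⁿ`, whose conjugate is `(y x y⁻¹)ⁿ`, homogeneity turns this into
`n ℓ (y x y⁻¹) ≤ n ℓ x + 2 ℓ y` for every `n`, and dividing by `n → ∞` gives `ℓ (y x y⁻¹) ≤ ℓ x`.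
Conjugating back by `y⁻¹` gives the reverse inequality.
-/

theorem le_of_forall_nat_mul_le_mul_add {α : Type*} [Field α] [LinearOrder α]
    [IsStrictOrderedRing α] [Archimedean α] {a b c : α} (h : ∀ n : ℕ, n * a ≤ n * b + c) :
    a ≤ b := by
  by_contra! hba
  obtain ⟨n, hn⟩ := exists_nat_gt (c / (a - b))
  rw [div_lt_iff₀ (sub_pos.2 hba)] at hn
  linarith [h n]

section PseudoLength

variable {G : Type*} [Group G] {ℓ : G → ℝ}

theorem pseudoLength_conj_le_add (hinv : ∀ x : G, ℓ x⁻¹ = ℓ x)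
    (htri : ∀ x y : G, ℓ (x * y) ≤ ℓ x + ℓ y) (x y : G) :
    ℓ (y * x * y⁻¹) ≤ ℓ x + 2 * ℓ y := by
  calc ℓ (y * x * y⁻¹) ≤ ℓ y + ℓ x + ℓ y⁻¹ := (htri _ _).trans (by linarith [htri y x])
    _ = ℓ x + 2 * ℓ y := by rw [hinv]; ring

theorem pseudoLength_conj_le (hinv : ∀ x : G, ℓ x⁻¹ = ℓ x)
    (htri : ∀ x y : G, ℓ (x * y) ≤ ℓ x + ℓ y) (hhom : ∀ (x : G) (n : ℕ), ℓ (x ^ n) = n * ℓ x)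
    (x y : G) : ℓ (y * x * y⁻¹) ≤ ℓ x :=
  le_of_forall_nat_mul_le_mul_add fun n => by
    simpa only [← hhom, conj_pow] using pseudoLength_conj_le_add hinv htri (x ^ n) y

end PseudoLength

theorem homogeneous_pseudo_length_conj_invariant_general {G : Type*} [Group G] (ℓ : G → ℝ)
    (hinv : ∀ x : G, ℓ x⁻¹ = ℓ x)
    (htri : ∀ x y : G, ℓ (x * y) ≤ ℓ x + ℓ y)
    (hhom : ∀ (x : G) (n : ℤ), ℓ (x ^ n) = |(n : ℝ)| * ℓ x) :
    ∀ x y : G, ℓ (y * x * y⁻¹) = ℓ x := by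
  have hhom_nat (x : G) (n : ℕ) : ℓ (x ^ n) = n * ℓ x := by
    simpa using hhom x n
  have hconj := pseudoLength_conj_le hinv htri hhom_nat
  intro x y
  refine le_antisymm (hconj x y) ?_
  simpa [mul_assoc] using hconj (y * x * y⁻¹) y⁻¹

/-- Any homogeneous pseudo-length function is conjugation invariant. -/
theorem homogeneous_pseudo_length_conj_invariant {G : Type*} [Group G] (ℓ : G → ℝ)
    (hnonneg : ∀ x : G, 0 ≤ ℓ x)
    (hone : ℓ 1 = 0)
    (hinv : ∀ x : G, ℓ x⁻¹ = ℓ x)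
    (htri : ∀ x y : G, ℓ (x * y) ≤ ℓ x + ℓ y)
    (hhom : ∀ (x : G) (n : ℤ), ℓ (x ^ n) = |(n : ℝ)| * ℓ x) :
    ∀ x y : G, ℓ (y * x * y⁻¹) = ℓ x :=
  homogeneous_pseudo_length_conj_invariant_general ℓ hinv htri hhom
end

section
/- Let G be a group, c ∈ ℝ, and ‖·‖ : G → ℝ a function satisfying hypotheses (i) and (ii) with constant c. Let x, y, z, w ∈ G be such that x is conjugate to wy and x is conjugate to zw⁻¹ (i.e., there exist s, t ∈ G with x = s(wy)s⁻¹ and x = t(zw⁻¹)t⁻¹). Then ‖x‖ ≤ (‖y‖ + ‖z‖)/2 + (3/2)·c. -/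
/-!
Since `w y` is conjugate to `y w` and `z w⁻¹` to `w⁻¹ z`, `x` is conjugate to both `u = y w`
and `v = w⁻¹ z`, and `u v = y z`. Then `x²ⁿ = xⁿ xⁿ` is, up to bounded error, `uⁿ vⁿ`, a
telescoping product of `n` conjugates of `u v`. Hypothesis (ii) iterated along powers of two
says that an element whose powers grow at most like `n B` has length at most `B + c`; the same
principle shows that conjugation costs at most `c`. Together these give `‖x²‖ ≤ ‖y z‖ + 2c`,
and (ii) once more gives the bound on `‖x‖`.
-/

open Filter Topology

section QuasiNorm

variable {G : Type*} [Group G] {ℓ : G → ℝ} {c : ℝ}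

lemma map_pow_le_mul_add (htri : ∀ x y : G, ℓ (x * y) ≤ ℓ x + ℓ y) (a : G) (n : ℕ) :
    ℓ (a ^ n) ≤ n * ℓ a + ℓ 1 := by
  induction n with
  | zero => simp
  | succ n ih =>
    rw [pow_succ]
    push_cast
    linarith [htri (a ^ n) a]

lemma two_pow_mul_sub_le_map_pow_two_pow (hsq : ∀ x : G, 2 * ℓ x - c ≤ ℓ (x ^ 2))
    (a : G) (k : ℕ) :
    2 ^ k * ℓ a - (2 ^ k - 1) * c ≤ ℓ (a ^ 2 ^ k) := by
  induction k with
  | zero => simp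
  | succ k ih =>
    rw [pow_succ (2 : ℕ) k, pow_mul, pow_succ (2 : ℝ) k]
    linarith [hsq (a ^ 2 ^ k)]

lemma le_add_of_map_pow_le (hsq : ∀ x : G, 2 * ℓ x - c ≤ ℓ (x ^ 2)) {a : G} {B M : ℝ}
    (h : ∀ n : ℕ, ℓ (a ^ n) ≤ n * B + M) : ℓ a ≤ B + c := by
  have hlim : Tendsto (fun k : ℕ => B + c + (M - c) * (1 / 2) ^ k) atTop (𝓝 (B + c)) := by
    simpa using ((tendsto_pow_atTop_nhds_zero_of_lt_one (r := (1 / 2 : ℝ)) (by norm_num)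
      (by norm_num)).const_mul (M - c)).const_add (B + c)
  refine ge_of_tendsto' hlim fun k => ?_
  have hlow := two_pow_mul_sub_le_map_pow_two_pow hsq a k
  have hup := h (2 ^ k)
  have hk : (0 : ℝ) < 2 ^ k := by positivity
  push_cast at hup
  rw [one_div_pow, mul_one_div, ← sub_le_iff_le_add', le_div_iff₀ hk]
  nlinarith

lemma map_conj_le (htri : ∀ x y : G, ℓ (x * y) ≤ ℓ x + ℓ y)
    (hsq : ∀ x : G, 2 * ℓ x - c ≤ ℓ (x ^ 2)) (g a : G) :
    ℓ (g * a * g⁻¹) ≤ ℓ a + c := by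
  refine le_add_of_map_pow_le hsq (M := ℓ g + ℓ 1 + ℓ g⁻¹) fun n => ?_
  rw [conj_pow]
  linarith [htri (g * a ^ n) g⁻¹, htri g (a ^ n), map_pow_le_mul_add htri a n]

lemma map_pow_mul_pow_le (htri : ∀ x y : G, ℓ (x * y) ≤ ℓ x + ℓ y)
    (hsq : ∀ x : G, 2 * ℓ x - c ≤ ℓ (x ^ 2)) (u v : G) (n : ℕ) :
    ℓ (u ^ n * v ^ n) ≤ n * (ℓ (u * v) + c) + ℓ 1 := by
  induction n with
  | zero => simp
  | succ n ih =>
    have hsplit :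
        u ^ (n + 1) * v ^ (n + 1) = u ^ n * (u * v) * (u ^ n)⁻¹ * (u ^ n * v ^ n) := by
      group
    rw [hsplit]
    push_cast
    linarith [htri (u ^ n * (u * v) * (u ^ n)⁻¹) (u ^ n * v ^ n),
      map_conj_le htri hsq (u ^ n) (u * v)]

lemma map_sq_le_of_conj (htri : ∀ x y : G, ℓ (x * y) ≤ ℓ x + ℓ y)
    (hsq : ∀ x : G, 2 * ℓ x - c ≤ ℓ (x ^ 2)) {x g h u v : G}
    (hg : x = g * u * g⁻¹) (hh : x = h * v * h⁻¹) :
    ℓ (x ^ 2) ≤ ℓ (u * v) + c + c := by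
  have hsplit (n : ℕ) :
      (x ^ 2) ^ n = g * (u ^ n * v ^ n) * ((v ^ n)⁻¹ * (g⁻¹ * h) * v ^ n) * h⁻¹ := by
    rw [← pow_mul, two_mul, pow_add]
    nth_rewrite 1 [hg]
    rw [hh, conj_pow, conj_pow]
    group
  refine le_add_of_map_pow_le hsq (M := ℓ g + ℓ 1 + (ℓ (g⁻¹ * h) + c) + ℓ h⁻¹) fun n => ?_
  have hconj := map_conj_le htri hsq (v ^ n)⁻¹ (g⁻¹ * h)
  rw [inv_inv] at hconj
  rw [hsplit]
  linarith [htri (g * (u ^ n * v ^ n) * ((v ^ n)⁻¹ * (g⁻¹ * h) * v ^ n)) h⁻¹,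
    htri (g * (u ^ n * v ^ n)) ((v ^ n)⁻¹ * (g⁻¹ * h) * v ^ n),
    htri g (u ^ n * v ^ n), map_pow_mul_pow_le htri hsq u v n]

end QuasiNorm

/-- Splitting lemma: if `x` is conjugate to both `w * y` and `z * w⁻¹`, then
`ℓ x ≤ (ℓ y + ℓ z) / 2 + (3/2) c`. -/
theorem splitting_lemma {G : Type*} [Group G] (c : ℝ) (ℓ : G → ℝ)
    (htri : ∀ x y : G, ℓ (x * y) ≤ ℓ x + ℓ y)
    (hsq : ∀ x : G, 2 * ℓ x - c ≤ ℓ (x ^ 2))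
    (x y z w : G) (s t : G)
    (hs : x = s * (w * y) * s⁻¹) (ht : x = t * (z * w⁻¹) * t⁻¹) :
    ℓ x ≤ (ℓ y + ℓ z) / 2 + (3 / 2) * c := by
  have hyw : x = (s * w) * (y * w) * (s * w)⁻¹ := by rw [hs]; group
  have hwz : x = (t * w) * (w⁻¹ * z) * (t * w)⁻¹ := by rw [ht]; group
  have hx_sq := map_sq_le_of_conj htri hsq hyw hwz
  rw [show y * w * (w⁻¹ * z) = y * z by group] at hx_sq
  linarith [hsq x, htri y z]
end

section
/- Let G be a group, c ∈ ℝ, and ‖·‖ : G → ℝ a function satisfying hypotheses (i) and (ii) with constant c. Fix x, y ∈ G and define f : ℤ × ℤ → ℝ by f(m,k) := ‖x^m · [x,y]^k‖. Then for all m, k ∈ ℤ one has f(m,k) ≤ (f(m−1,k) + f(m+1,k−1))/2 + 2c. -/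
/-!
Hypothesis (ii), iterated along `u, u², u⁴, …`, gives `ℓ(u^(2^n)) ≥ 2^n ℓ(u) − (2^n − 1)c`, while
subadditivity gives `ℓ(u^N) ≤ N ℓ(u) + ℓ(1)`. Comparing the two growth rates shows that
`ℓ` is invariant under conjugation up to `c`. Put `a = x^m [x,y]^k`. Then `a = x · b` and
`a = b' · t` with `b = x^(m-1) [x,y]^k`, `b' = x^(m+1) [x,y]^(k-1)` and `t` a conjugate of `x⁻¹`.
Writing `a^(2N) = a^N a^N` as `x^N ⋯ t^N`, the factors `x^N` and `t^N` almost cancel after a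
cyclic permutation, so `ℓ(a^(2N)) ≤ N(ℓ b + ℓ b') + O(N c) + O(1)`; against the lower bound
`ℓ(a^(2N)) ≥ 2N ℓ(a) − O(N c)` with `N = 2^n → ∞` this yields `2ℓ(a) ≤ ℓ(b) + ℓ(b') + 4c`.
-/

lemma nonpos_of_forall_two_pow_mul_le_s8 {δ C : ℝ} (h : ∀ n : ℕ, 2 ^ n * δ ≤ C) : δ ≤ 0 := by
  by_contra! hδ
  obtain ⟨n, hn⟩ := pow_unbounded_of_one_lt (C / δ) one_lt_two
  have := h n
  rw [div_lt_iff₀ hδ] at hn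
  linarith

lemma map_pow_le_of_subadditive {G : Type*} [Monoid G] {ℓ : G → ℝ}
    (hℓ : ∀ x y : G, ℓ (x * y) ≤ ℓ x + ℓ y) (u : G) (n : ℕ) : ℓ (u ^ n) ≤ n * ℓ u + ℓ 1 := by
  induction n with
  | zero => simp
  | succ n ih =>
    rw [pow_succ]
    push_cast
    linarith [hℓ (u ^ n) u]

structure IsAlmostHomogeneous {G : Type*} [Group G] (ℓ : G → ℝ) (c : ℝ) : Prop where
  map_mul_le : ∀ x y : G, ℓ (x * y) ≤ ℓ x + ℓ y
  two_mul_sub_le_map_sq : ∀ x : G, 2 * ℓ x - c ≤ ℓ (x ^ 2)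

namespace IsAlmostHomogeneous

open scoped commutatorElement

variable {G : Type*} [Group G] {ℓ : G → ℝ} {c : ℝ}

lemma two_pow_mul_sub_le_map_pow (hℓ : IsAlmostHomogeneous ℓ c) (u : G) (n : ℕ) :
    2 ^ n * ℓ u - (2 ^ n - 1) * c ≤ ℓ (u ^ 2 ^ n) := by
  induction n with
  | zero => simp
  | succ n ih =>
    rw [pow_succ, pow_succ, pow_mul]
    linarith [hℓ.two_mul_sub_le_map_sq (u ^ 2 ^ n)]

lemma map_conj_le (hℓ : IsAlmostHomogeneous ℓ c) (g u : G) : ℓ (g * u * g⁻¹) ≤ ℓ u + c := by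
  suffices ℓ (g * u * g⁻¹) - ℓ u - c ≤ 0 by linarith
  refine nonpos_of_forall_two_pow_mul_le_s8 (C := ℓ g + ℓ g⁻¹ + ℓ 1 - c) fun n => ?_
  have lower := hℓ.two_pow_mul_sub_le_map_pow (g * u * g⁻¹) n
  have upper := map_pow_le_of_subadditive hℓ.map_mul_le u (2 ^ n)
  rw [conj_pow] at lower
  push_cast at upper
  linarith [hℓ.map_mul_le (g * u ^ 2 ^ n) g⁻¹, hℓ.map_mul_le g (u ^ 2 ^ n)]

lemma map_mul_le_map_mul_swap (hℓ : IsAlmostHomogeneous ℓ c) (g h : G) :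
    ℓ (g * h) ≤ ℓ (h * g) + c := by
  simpa [← mul_assoc] using hℓ.map_conj_le g (h * g)

lemma map_commutatorElement_le (hℓ : IsAlmostHomogeneous ℓ c) (g h : G) :
    ℓ ⁅g, h⁆ ≤ ℓ g + ℓ g⁻¹ + c := by
  have hconj := hℓ.map_conj_le h g⁻¹
  rw [show ⁅g, h⁆ = g * (h * g⁻¹ * h⁻¹) by rw [commutatorElement_def]; group]
  linarith [hℓ.map_mul_le g (h * g⁻¹ * h⁻¹)]

lemma exists_pow_eq_pow_mul (hℓ : IsAlmostHomogeneous ℓ c) {a s b : G} (hab : s * b = a)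
    (N : ℕ) : ∃ B, a ^ N = s ^ N * B ∧ ℓ B ≤ N * (ℓ b + c) + ℓ 1 := by
  induction N with
  | zero => exact ⟨1, by simp, by simp⟩
  | succ N ih =>
    obtain ⟨B, hB, hBℓ⟩ := ih
    refine ⟨(s ^ N)⁻¹ * b * (s ^ N)⁻¹⁻¹ * B, ?_, ?_⟩
    · rw [pow_succ', hB, ← hab]
      group
    · push_cast
      linarith [hℓ.map_mul_le ((s ^ N)⁻¹ * b * (s ^ N)⁻¹⁻¹) B, hℓ.map_conj_le (s ^ N)⁻¹ b]

lemma exists_pow_eq_mul_pow (hℓ : IsAlmostHomogeneous ℓ c) {a b t : G} (hab : b * t = a)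
    (N : ℕ) : ∃ C, a ^ N = C * t ^ N ∧ ℓ C ≤ N * (ℓ b + c) + ℓ 1 := by
  induction N with
  | zero => exact ⟨1, by simp, by simp⟩
  | succ N ih =>
    obtain ⟨C, hC, hCℓ⟩ := ih
    refine ⟨C * (t ^ N * b * (t ^ N)⁻¹), ?_, ?_⟩
    · rw [pow_succ, hC, ← hab]
      group
    · push_cast
      linarith [hℓ.map_mul_le C (t ^ N * b * (t ^ N)⁻¹), hℓ.map_conj_le (t ^ N) b]

lemma two_mul_le_of_mul_eq_mul_conj_inv (hℓ : IsAlmostHomogeneous ℓ c) {a s b b' q : G}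
    (hsb : s * b = a) (hb't : b' * (q * s⁻¹ * q⁻¹) = a) :
    2 * ℓ a ≤ ℓ b + ℓ b' + 4 * c := by
  suffices 2 * ℓ a - (ℓ b + ℓ b') - 4 * c ≤ 0 by linarith
  refine nonpos_of_forall_two_pow_mul_le_s8 (C := ℓ q + ℓ q⁻¹ + 2 * ℓ 1 + c) fun n => ?_
  obtain ⟨B, hB, hBℓ⟩ := hℓ.exists_pow_eq_pow_mul hsb (2 ^ n)
  obtain ⟨C, hC, hCℓ⟩ := hℓ.exists_pow_eq_mul_pow hb't (2 ^ n)
  set N : ℕ := 2 ^ n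
  set t := q * s⁻¹ * q⁻¹ with ht
  have hsplit : a ^ 2 ^ (n + 1) = s ^ N * (B * C * t ^ N) := by
    rw [pow_succ, pow_mul, sq]
    nth_rewrite 1 [hB]
    rw [hC]
    group
  have hcancel : t ^ N * s ^ N = ⁅q, (s ^ N)⁻¹⁆ := by
    rw [ht, conj_pow, commutatorElement_def, inv_pow, inv_inv]
  -- moved cyclically to the end, `s ^ N` cancels against `t ^ N` up to a commutator
  have upper : ℓ (a ^ 2 ^ (n + 1)) ≤ ℓ B + ℓ C + (ℓ q + ℓ q⁻¹ + c) + c := by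
    calc ℓ (a ^ 2 ^ (n + 1)) ≤ ℓ (B * C * (t ^ N * s ^ N)) + c := by
          simpa only [hsplit, mul_assoc] using hℓ.map_mul_le_map_mul_swap (s ^ N) (B * C * t ^ N)
      _ ≤ ℓ B + ℓ C + (ℓ q + ℓ q⁻¹ + c) + c := by
          rw [hcancel]
          linarith [hℓ.map_mul_le (B * C) ⁅q, (s ^ N)⁻¹⁆, hℓ.map_mul_le B C,
            hℓ.map_commutatorElement_le q (s ^ N)⁻¹]
  have lower := hℓ.two_pow_mul_sub_le_map_pow a (n + 1)
  have hN : ((N : ℕ) : ℝ) = 2 ^ n := by push_cast [N]; rfl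
  rw [hN] at hBℓ hCℓ
  rw [pow_succ] at lower
  linarith

end IsAlmostHomogeneous

/-- The recursive inequality for `f(m,k) := ℓ (x^m [x,y]^k)`:
`f(m,k) ≤ (f(m-1,k) + f(m+1,k-1)) / 2 + 2c`. -/
theorem f_recursive_inequality {G : Type*} [Group G] (c : ℝ) (ℓ : G → ℝ)
    (htri : ∀ x y : G, ℓ (x * y) ≤ ℓ x + ℓ y)
    (hsq : ∀ x : G, 2 * ℓ x - c ≤ ℓ (x ^ 2))
    (x y : G)
    (f : ℤ × ℤ → ℝ)
    (hf : ∀ m k : ℤ, f (m, k) = ℓ (x ^ m * (x * y * x⁻¹ * y⁻¹) ^ k)) :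
    ∀ m k : ℤ, f (m, k) ≤ (f (m - 1, k) + f (m + 1, k - 1)) / 2 + 2 * c := by
  intro m k
  set z := x * y * x⁻¹ * y⁻¹ with hz
  have hx : x * (x ^ (m - 1) * z ^ k) = x ^ m * z ^ k := by group
  have hyx : y * x⁻¹ * y⁻¹ = x⁻¹ * z := by rw [hz]; group
  have hconj : x ^ (m + 1) * z ^ (k - 1) * (z ^ (1 - k) * y * x⁻¹ * (z ^ (1 - k) * y)⁻¹) =
      x ^ m * z ^ k := by
    rw [show z ^ (1 - k) * y * x⁻¹ * (z ^ (1 - k) * y)⁻¹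
        = z ^ (1 - k) * (y * x⁻¹ * y⁻¹) * z ^ (k - 1) by group, hyx]
    group
  have key := IsAlmostHomogeneous.two_mul_le_of_mul_eq_mul_conj_inv ⟨htri, hsq⟩ hx hconj
  rw [hf, hf, hf]
  linarith
end

section
/- Let G be a group, c ∈ ℝ, and ‖·‖ : G → ℝ a function satisfying hypotheses (i) and (ii) with constant c. Fix x, y ∈ G and set A := max(‖x‖, ‖x⁻¹‖) + (1/2)·max(‖[x,y]‖, ‖[x,y]⁻¹‖). Then for every natural number n ≥ 0 one has ‖[x,y]ⁿ‖ ≤ A·√(2n) + ‖e‖ + 4cn. -/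
/-! Everything rests on commutators being uniformly short, `ℓ ⁅u, v⁆ ≤ 4c`. Iterating (ii) gives
`ℓ g ≤ ℓ (g ^ 2 ^ k) / 2 ^ k + c`, so a bound `ℓ (g ^ (2m)) ≤ 2m·a + C` with `C` independent of `m`
yields `ℓ g ≤ a + c`. Hence conjugation costs at most `c`; and for `W = ⁅u, v⁆` the power `W ^ (2m)`
is a conjugate of `v`, times `v⁻¹`, times `m` conjugates of `v W v⁻¹ W = W⁻¹ ⁅u, v²⁆ W`, which gives
`ℓ ⁅u, v⁆ ≤ ℓ ⁅u, v²⁆ / 2 + 2c`. Iterating in `v`, with `ℓ ⁅u, w⁆ ≤ ℓ u + ℓ u⁻¹ + c` for all `w`,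
gives `ℓ ⁅u, v⁆ ≤ 4c`, hence `ℓ (⁅x, y⁆ ^ n) ≤ ℓ 1 + 4cn`, which is stronger than the claim as
`A ≥ 0`. -/

open Filter Topology
open scoped commutatorElement

theorem le_of_forall_le_add_div_two_pow {a b D : ℝ} (h : ∀ k : ℕ, a ≤ b + D / 2 ^ k) : a ≤ b := by
  have hlim : Tendsto (fun k : ℕ => b + D / 2 ^ k) atTop (𝓝 b) := by
    simpa using tendsto_const_nhds.add
      ((tendsto_pow_atTop_atTop_of_one_lt one_lt_two).const_div_atTop D)
  exact ge_of_tendsto' hlim h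

theorem le_div_two_pow_add_of_forall_le_div_two_add {α : Type*} {f : α → ℝ} {T : α → α} {d : ℝ}
    (hd : 0 ≤ d) (h : ∀ a, f a ≤ f (T a) / 2 + d) (k : ℕ) (a : α) :
    f a ≤ f (T^[k] a) / 2 ^ k + 2 * d := by
  induction k generalizing a with
  | zero => simp only [Function.iterate_zero, id_eq, pow_zero, div_one]; linarith
  | succ k ih =>
    calc f a ≤ f (T a) / 2 + d := h a
      _ ≤ (f (T^[k] (T a)) / 2 ^ k + 2 * d) / 2 + d := by linarith [ih (T a)]
      _ = f (T^[k + 1] a) / 2 ^ (k + 1) + 2 * d := by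
        rw [Function.iterate_succ_apply]; ring

section SubadditiveLength

variable {G : Type*} [Group G] {c : ℝ} {ℓ : G → ℝ}

theorem apply_one_nonneg (htri : ∀ x y : G, ℓ (x * y) ≤ ℓ x + ℓ y) : 0 ≤ ℓ 1 := by
  have := htri 1 1
  rw [mul_one] at this
  linarith

theorem max_apply_apply_inv_nonneg (htri : ∀ x y : G, ℓ (x * y) ≤ ℓ x + ℓ y) (g : G) :
    0 ≤ max (ℓ g) (ℓ g⁻¹) := by
  have := htri g g⁻¹
  rw [mul_inv_cancel] at this
  linarith [apply_one_nonneg htri, le_max_left (ℓ g) (ℓ g⁻¹), le_max_right (ℓ g) (ℓ g⁻¹)]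

theorem apply_pow_le (htri : ∀ x y : G, ℓ (x * y) ≤ ℓ x + ℓ y) (g : G) (n : ℕ) :
    ℓ (g ^ n) ≤ ℓ 1 + n * ℓ g := by
  induction n with
  | zero => simp
  | succ n ih =>
    rw [pow_succ]
    push_cast
    linarith [htri (g ^ n) g]

theorem const_nonneg (htri : ∀ x y : G, ℓ (x * y) ≤ ℓ x + ℓ y)
    (hsq : ∀ x : G, 2 * ℓ x - c ≤ ℓ (x ^ 2)) : 0 ≤ c := by
  have := hsq 1
  rw [one_pow] at this
  linarith [apply_one_nonneg htri]

theorem apply_le_apply_pow_two_pow_div_add (htri : ∀ x y : G, ℓ (x * y) ≤ ℓ x + ℓ y)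
    (hsq : ∀ x : G, 2 * ℓ x - c ≤ ℓ (x ^ 2)) (g : G) (k : ℕ) :
    ℓ g ≤ ℓ (g ^ 2 ^ k) / 2 ^ k + c := by
  have := le_div_two_pow_add_of_forall_le_div_two_add (f := ℓ) (T := (· ^ 2)) (d := c / 2)
    (by linarith [const_nonneg htri hsq]) (fun g => by linarith [hsq g]) k g
  rwa [pow_iterate, mul_div_cancel₀ c two_ne_zero] at this

theorem apply_le_add_of_apply_pow_even_le (htri : ∀ x y : G, ℓ (x * y) ≤ ℓ x + ℓ y)
    (hsq : ∀ x : G, 2 * ℓ x - c ≤ ℓ (x ^ 2)) {g : G} {a C : ℝ}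
    (h : ∀ m : ℕ, ℓ (g ^ (2 * m)) ≤ 2 * m * a + C) : ℓ g ≤ a + c := by
  refine le_of_forall_le_add_div_two_pow (D := C / 2) fun k => ?_
  have hpow := h (2 ^ k)
  rw [← pow_succ'] at hpow
  push_cast [← pow_succ'] at hpow
  calc ℓ g ≤ ℓ (g ^ 2 ^ (k + 1)) / 2 ^ (k + 1) + c :=
        apply_le_apply_pow_two_pow_div_add htri hsq g _
    _ ≤ (2 ^ (k + 1) * a + C) / 2 ^ (k + 1) + c := by gcongr
    _ = a + c + C / 2 / 2 ^ k := by field_simp; ring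

theorem apply_conj_le (htri : ∀ x y : G, ℓ (x * y) ≤ ℓ x + ℓ y)
    (hsq : ∀ x : G, 2 * ℓ x - c ≤ ℓ (x ^ 2)) (g u : G) : ℓ (g * u * g⁻¹) ≤ ℓ u + c := by
  refine apply_le_add_of_apply_pow_even_le htri hsq (C := ℓ g + ℓ 1 + ℓ g⁻¹) fun m => ?_
  have hpow := apply_pow_le htri u (2 * m)
  push_cast at hpow
  rw [conj_pow]
  linarith [htri (g * u ^ (2 * m)) g⁻¹, htri g (u ^ (2 * m))]

theorem apply_conj_pow_mul_pow_le (htri : ∀ x y : G, ℓ (x * y) ≤ ℓ x + ℓ y)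
    (hsq : ∀ x : G, 2 * ℓ x - c ≤ ℓ (x ^ 2)) (v w : G) (m : ℕ) :
    ℓ (v * w ^ m * v⁻¹ * w ^ m) ≤ ℓ 1 + m * (ℓ (v * w * v⁻¹ * w) + c) := by
  induction m with
  | zero => simp
  | succ m ih =>
    have hsplit : v * w ^ (m + 1) * v⁻¹ * w ^ (m + 1)
        = (v * w ^ m * v⁻¹) * (v * w * v⁻¹ * w) * (v * w ^ m * v⁻¹)⁻¹
          * (v * w ^ m * v⁻¹ * w ^ m) := by
      rw [pow_succ]; group
    rw [hsplit]
    push_cast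
    linarith [htri ((v * w ^ m * v⁻¹) * (v * w * v⁻¹ * w) * (v * w ^ m * v⁻¹)⁻¹)
      (v * w ^ m * v⁻¹ * w ^ m), apply_conj_le htri hsq (v * w ^ m * v⁻¹) (v * w * v⁻¹ * w)]

theorem apply_commutator_le_apply_commutator_sq_div_two_add
    (htri : ∀ x y : G, ℓ (x * y) ≤ ℓ x + ℓ y)
    (hsq : ∀ x : G, 2 * ℓ x - c ≤ ℓ (x ^ 2)) (u v : G) :
    ℓ ⁅u, v⁆ ≤ ℓ ⁅u, v ^ 2⁆ / 2 + 2 * c := by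
  set W := ⁅u, v⁆
  have hconj : ℓ (v * W * v⁻¹ * W) ≤ ℓ ⁅u, v ^ 2⁆ + c := by
    have : v * W * v⁻¹ * W = W⁻¹ * ⁅u, v ^ 2⁆ * W⁻¹⁻¹ := by
      simp only [W, commutatorElement_def]; group
    rw [this]
    exact apply_conj_le htri hsq _ _
  suffices ℓ W ≤ (ℓ ⁅u, v ^ 2⁆ + 2 * c) / 2 + c by linarith
  refine apply_le_add_of_apply_pow_even_le htri hsq (C := ℓ v + c + ℓ v⁻¹ + ℓ 1) fun m => ?_
  have hsplit : W ^ (2 * m) = (W ^ m * v * (W ^ m)⁻¹) * v⁻¹ * (v * W ^ m * v⁻¹ * W ^ m) := by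
    rw [two_mul, pow_add]; group
  have hpeel : ℓ (v * W ^ m * v⁻¹ * W ^ m) ≤ ℓ 1 + m * (ℓ ⁅u, v ^ 2⁆ + 2 * c) :=
    (apply_conj_pow_mul_pow_le htri hsq v W m).trans (by gcongr ℓ 1 + _ * ?_; linarith [hconj])
  rw [hsplit]
  linarith [htri ((W ^ m * v * (W ^ m)⁻¹) * v⁻¹) (v * W ^ m * v⁻¹ * W ^ m),
    htri (W ^ m * v * (W ^ m)⁻¹) v⁻¹, apply_conj_le htri hsq (W ^ m) v]

theorem apply_commutator_le (htri : ∀ x y : G, ℓ (x * y) ≤ ℓ x + ℓ y)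
    (hsq : ∀ x : G, 2 * ℓ x - c ≤ ℓ (x ^ 2)) (u v : G) : ℓ ⁅u, v⁆ ≤ 4 * c := by
  have hbound (w : G) : ℓ ⁅u, w⁆ ≤ ℓ u + ℓ u⁻¹ + c := by
    have : ⁅u, w⁆ = u * (w * u⁻¹ * w⁻¹) := by simp only [commutatorElement_def, mul_assoc]
    rw [this]
    linarith [htri u (w * u⁻¹ * w⁻¹), apply_conj_le htri hsq w u⁻¹]
  refine le_of_forall_le_add_div_two_pow (D := ℓ u + ℓ u⁻¹ + c) fun k => ?_
  have := le_div_two_pow_add_of_forall_le_div_two_add (f := fun w => ℓ ⁅u, w⁆) (T := (· ^ 2))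
    (by linarith [const_nonneg htri hsq])
    (apply_commutator_le_apply_commutator_sq_div_two_add htri hsq u) k v
  rw [pow_iterate] at this
  calc ℓ ⁅u, v⁆ ≤ ℓ ⁅u, v ^ 2 ^ k⁆ / 2 ^ k + 2 * (2 * c) := this
    _ ≤ (ℓ u + ℓ u⁻¹ + c) / 2 ^ k + 2 * (2 * c) := by gcongr; exact hbound _
    _ = 4 * c + (ℓ u + ℓ u⁻¹ + c) / 2 ^ k := by ring

end SubadditiveLength

/-- Quantitative bound: `ℓ ([x,y]^n) ≤ A √(2n) + ℓ e + 4 c n`, where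
`A = max(ℓ x, ℓ x⁻¹) + (1/2) max(ℓ [x,y], ℓ [x,y]⁻¹)`. -/
theorem commutator_pow_sqrt_bound {G : Type*} [Group G] (c : ℝ) (ℓ : G → ℝ)
    (htri : ∀ x y : G, ℓ (x * y) ≤ ℓ x + ℓ y)
    (hsq : ∀ x : G, 2 * ℓ x - c ≤ ℓ (x ^ 2))
    (x y : G) (A : ℝ)
    (hA : A = max (ℓ x) (ℓ x⁻¹)
        + (1 / 2) * max (ℓ (x * y * x⁻¹ * y⁻¹)) (ℓ (x * y * x⁻¹ * y⁻¹)⁻¹)) :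
    ∀ n : ℕ, ℓ ((x * y * x⁻¹ * y⁻¹) ^ n) ≤ A * Real.sqrt (2 * n) + ℓ 1 + 4 * c * n := by
  intro n
  have hA_nonneg : 0 ≤ A := by
    rw [hA]
    linarith [max_apply_apply_inv_nonneg htri x,
      max_apply_apply_inv_nonneg htri (x * y * x⁻¹ * y⁻¹)]
  calc ℓ ((x * y * x⁻¹ * y⁻¹) ^ n) ≤ ℓ 1 + n * ℓ ⁅x, y⁆ := apply_pow_le htri _ n
    _ ≤ ℓ 1 + n * (4 * c) := by gcongr; exact apply_commutator_le htri hsq x y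
    _ ≤ A * Real.sqrt (2 * n) + ℓ 1 + 4 * c * n := by
      nlinarith [mul_nonneg hA_nonneg (Real.sqrt_nonneg (2 * n))]
end
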